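/- For every a ∈ A and every J ⊆ X, the identity (a·u_J) ⊗ u_J = u_J ⊗ (u_J·a) holds in the tensor product A ⊗_ℂ A. -/

import Mathlib

/-- The power set `2^X` of `X`, regarded as a commutative monoid under
union, with identity the empty set (a unital semilattice). -/
def finsetUnionMonoid (X : Type*) [DecidableEq X] : CommMonoid (Finset X) where
  mul := (· ∪ ·)
  one := ∅
  mul_assoc := Finset.union_assoc
  one_mul := Finset.empty_union
  mul_one := Finset.union_empty
  mul_comm := Finset.union_comm

attribute [local instance] finsetUnionMonoid

variable {X : Type*} [Fintype X] [DecidableEq X]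

/-- The basis element `e_J` of the semigroup algebra `A = MonoidAlgebra ℂ (2^X)`
supported at `J ⊆ X`; one has `e_J * e_K = e_{J ∪ K}` and `e_∅ = 1`. -/
noncomputable def e (J : Finset X) : MonoidAlgebra ℂ (Finset X) :=
  MonoidAlgebra.single J 1

/-- `u_J = (∏_{i ∈ J} e_{{i}}) * (∏_{k ∈ X \ J} (e_∅ - e_{{k}}))`. -/
noncomputable def u (J : Finset X) : MonoidAlgebra ℂ (Finset X) :=
  (∏ i ∈ J, e {i}) * ∏ k ∈ Jᶜ, (e ∅ - e {k})


/- Multiplication by `e_K` fixes `u_J` when `K ⊆ J` and kills it otherwise, because a factor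
`e_∅ - e_k` with `k ∈ K \ J` is annihilated by the idempotent `e_K`. Hence `a * u_J` is a scalar
multiple `c • u_J` for every `a`, and the scalar moves freely across the tensor sign. -/

open TensorProduct in
theorem mul_tmul_eq_tmul_mul_of_mul_eq_smul {R A : Type*} [CommSemiring R] [CommSemiring A]
    [Algebra R A] {a u : A} {c : R} (h : a * u = c • u) :
    (a * u) ⊗ₜ[R] u = u ⊗ₜ[R] (u * a) := by
  rw [mul_comm u a, h, smul_tmul]

omit [Fintype X] in
lemma e_mul_e (K L : Finset X) : e K * e L = e (K ∪ L) := by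
  simp only [e, MonoidAlgebra.single_mul_single, one_mul]
  rfl

omit [Fintype X] in
lemma e_empty : e (∅ : Finset X) = 1 := rfl

omit [Fintype X] in
lemma prod_e_singleton (J : Finset X) : ∏ i ∈ J, e ({i} : Finset X) = e J := by
  induction J using Finset.induction_on with
  | empty => simp [e_empty]
  | insert i J hi ih => rw [Finset.prod_insert hi, ih, e_mul_e, ← Finset.insert_eq]

lemma u_eq (J : Finset X) : u J = e J * ∏ k ∈ Jᶜ, (1 - e {k}) := by
  rw [u, prod_e_singleton, e_empty]

omit [Fintype X] in
lemma e_mul_one_sub_e_singleton {K : Finset X} {k : X} (hk : k ∈ K) :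
    e K * (1 - e {k}) = 0 := by
  rw [mul_sub, mul_one, e_mul_e, Finset.union_eq_left.mpr (Finset.singleton_subset_iff.mpr hk),
    sub_self]

lemma e_mul_u (K J : Finset X) : e K * u J = if K ⊆ J then u J else 0 := by
  split_ifs with hKJ
  · rw [u_eq, ← mul_assoc, e_mul_e, Finset.union_eq_right.mpr hKJ]
  · obtain ⟨k, hkK, hkJ⟩ := Finset.not_subset.mp hKJ
    rw [u_eq, mul_left_comm, ← Finset.mul_prod_erase _ _ (Finset.mem_compl.mpr hkJ),
      ← mul_assoc (e K), e_mul_one_sub_e_singleton hkK, zero_mul, mul_zero]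

lemma exists_mul_u_eq_smul (a : MonoidAlgebra ℂ (Finset X)) (J : Finset X) :
    ∃ c : ℂ, a * u J = c • u J := by
  induction a using MonoidAlgebra.induction_on with
  | of K =>
    change ∃ c : ℂ, e K * u J = c • u J
    rw [e_mul_u]
    split_ifs
    · exact ⟨1, (one_smul ℂ _).symm⟩
    · exact ⟨0, (zero_smul ℂ _).symm⟩
  | add f g hf hg =>
    obtain ⟨c, hc⟩ := hf
    obtain ⟨d, hd⟩ := hg
    exact ⟨c + d, by rw [add_mul, hc, hd, add_smul]⟩
  | smul r f hf =>
    obtain ⟨c, hc⟩ := hf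
    exact ⟨r * c, by rw [smul_mul_assoc, hc, mul_smul]⟩

open TensorProduct in
/-- For every `a ∈ A` and every `J ⊆ X`, `(a * u_J) ⊗ u_J = u_J ⊗ (u_J * a)` in `A ⊗[ℂ] A`. -/
theorem au_tmul_u (a : MonoidAlgebra ℂ (Finset X)) (J : Finset X) :
    (a * u J) ⊗ₜ[ℂ] (u J) = (u J) ⊗ₜ[ℂ] (u J * a) := by
  obtain ⟨c, hc⟩ := exists_mul_u_eq_smul a J
  exact mul_tmul_eq_tmul_mul_of_mul_eq_smul hc
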